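/- arXiv:1509.04552 — 5 statements merged into one kernel-verified Lean document; each statement's English description precedes it below -/
import Mathlib

section
/- Let ρ : [0,1]² → ℝ be continuous, strictly positive, with uniform marginals (∫₀¹ρ(x,y)dx = ∫₀¹ρ(x,y)dy = 1 for all x,y). Let σ_n ∈ S_n be a sequence of permutations such that the empirical measures ν_{σ_n} := (1/n)Σ_{i=1}^n δ_{(i/n, σ_n(i)/n)} converge weakly to a probability measure μ on [0,1]². Then λ_n := Σ_{p=1}^n ρ(p/n, σ_n(p)/n) / (Σ_{q=1}^n ρ(p/n, q/n)) converges to ∫_{[0,1]²} ρ dμ as n → ∞. -/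
/-!
Each row sum `∑_q ρ(p/n, q/n)` is `n` times a Riemann sum of `∫₀¹ ρ(p/n, y) dy = 1`, uniformly in
`p` because `ρ` is uniformly continuous on the compact square. So `λ_n` is `o(1)` away from
`(1/n) ∑_p ρ(p/n, σ_n(p)/n) = ∫ ρ dν_{σ_n}`, which tends to `∫ ρ dμ` by weak convergence, applied
to a bounded continuous extension of `ρ` that agrees with `ρ` on the square carrying `μ`.
-/

open MeasureTheory Filter Set Topology

lemma exists_continuous_bounded_eqOn_Icc_prod {E : Type*} [NormedAddCommGroup E] {a b c d : ℝ}
    (hab : a ≤ b) (hcd : c ≤ d) {f : ℝ × ℝ → E} (hf : ContinuousOn f (Icc a b ×ˢ Icc c d)) :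
    ∃ g : ℝ × ℝ → E, Continuous g ∧ (∃ C, ∀ z, ‖g z‖ ≤ C) ∧ EqOn g f (Icc a b ×ˢ Icc c d) := by
  obtain ⟨C, hC⟩ := (isCompact_Icc.prod isCompact_Icc).exists_bound_of_continuousOn hf
  have hproj : ∀ z : ℝ × ℝ,
      ((projIcc a b hab z.1 : ℝ), (projIcc c d hcd z.2 : ℝ)) ∈ Icc a b ×ˢ Icc c d :=
    fun z => ⟨(projIcc a b hab z.1).2, (projIcc c d hcd z.2).2⟩
  refine ⟨fun z => f (projIcc a b hab z.1, projIcc c d hcd z.2), ?_,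
    ⟨C, fun z => hC _ (hproj z)⟩, ?_⟩
  · exact hf.comp_continuous (by fun_prop) hproj
  · rintro ⟨x, y⟩ ⟨hx, hy⟩
    simp only [projIcc_of_mem hab hx, projIcc_of_mem hcd hy]

lemma abs_sum_div_sub_integral_le {f : ℝ → ℝ} (hf : ContinuousOn f (Icc 0 1)) {n : ℕ} (hn : n ≠ 0)
    {ε : ℝ} (hε : ∀ y ∈ Icc (0:ℝ) 1, ∀ z ∈ Icc (0:ℝ) 1, |y - z| ≤ 1 / n → |f y - f z| ≤ ε) :
    |(∑ q : Fin n, f (((q : ℕ) + 1 : ℝ) / n)) / n - ∫ y in (0:ℝ)..1, f y| ≤ ε := by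
  have hn₀ : (0:ℝ) < n := by positivity
  set t : ℕ → ℝ := fun k => k / n with ht
  have ht_le : ∀ k, t k ≤ t (k + 1) := fun k => by simp only [ht]; gcongr; simp
  have ht_sub : ∀ k < n, Icc (t k) (t (k + 1)) ⊆ Icc 0 1 := fun k hk =>
    Icc_subset_Icc (by positivity) (div_le_one_of_le₀ (by exact_mod_cast hk) hn₀.le)
  have hint : ∀ k < n, IntervalIntegrable f volume (t k) (t (k + 1)) := fun k hk =>
    (hf.mono (uIcc_of_le (ht_le k) ▸ ht_sub k hk)).intervalIntegrable
  have hpiece : ∀ k < n,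
      |f (t (k + 1)) / n - ∫ y in t k..t (k + 1), f y| ≤ ε / n := by
    intro k hk
    have hlen : t (k + 1) - t k = 1 / n := by simp only [ht]; push_cast; field_simp; ring
    have hconst : f (t (k + 1)) / n = ∫ _ in t k..t (k + 1), f (t (k + 1)) := by
      rw [intervalIntegral.integral_const, smul_eq_mul, hlen]; ring
    rw [hconst, ← intervalIntegral.integral_sub intervalIntegrable_const (hint k hk)]
    calc ‖∫ y in t k..t (k + 1), (f (t (k + 1)) - f y)‖ ≤ ε * |t (k + 1) - t k| := by
          refine intervalIntegral.norm_integral_le_of_norm_le_const fun y hy => ?_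
          rw [uIoc_of_le (ht_le k)] at hy
          have hy' : y ∈ Icc (t k) (t (k + 1)) := Ioc_subset_Icc_self hy
          refine hε _ (ht_sub k hk (right_mem_Icc.2 (ht_le k))) _ (ht_sub k hk hy') ?_
          rw [abs_of_nonneg (by linarith [hy.2])]
          linarith [hy.1]
      _ = ε / n := by rw [hlen, abs_of_pos (by positivity)]; ring
  have hsplit : ∫ y in (0:ℝ)..1, f y = ∑ k ∈ Finset.range n, ∫ y in t k..t (k + 1), f y := by
    rw [intervalIntegral.sum_integral_adjacent_intervals hint]
    simp [ht, hn]
  have hgrid : ∀ k : ℕ, ((k : ℝ) + 1) / n = t (k + 1) := fun k => by simp [ht]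
  simp_rw [hgrid]
  rw [hsplit, Fin.sum_univ_eq_sum_range (fun k => f (t (k + 1))), Finset.sum_div,
    ← Finset.sum_sub_distrib]
  calc |∑ k ∈ Finset.range n, (f (t (k + 1)) / n - ∫ y in t k..t (k + 1), f y)|
      ≤ ∑ k ∈ Finset.range n, |f (t (k + 1)) / n - ∫ y in t k..t (k + 1), f y| :=
        Finset.abs_sum_le_sum_abs _ _
    _ ≤ ∑ _k ∈ Finset.range n, ε / n :=
        Finset.sum_le_sum fun k hk => hpiece k (Finset.mem_range.1 hk)
    _ = ε := by rw [Finset.sum_const, Finset.card_range, nsmul_eq_mul]; field_simp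

lemma tendstoUniformlyOn_sum_div_integral {X : Type*} [PseudoMetricSpace X] {s : Set X}
    (hs : IsCompact s) {f : X × ℝ → ℝ} (hf : ContinuousOn f (s ×ˢ Icc 0 1)) :
    TendstoUniformlyOn (fun (n : ℕ) x => (∑ q : Fin n, f (x, ((q : ℕ) + 1 : ℝ) / n)) / n)
      (fun x => ∫ y in (0:ℝ)..1, f (x, y)) atTop s := by
  rw [Metric.tendstoUniformlyOn_iff]
  intro ε hε
  obtain ⟨δ, hδ, hf_unif⟩ := Metric.uniformContinuousOn_iff_le.1
    ((hs.prod isCompact_Icc).uniformContinuousOn_of_continuous hf) (ε / 2) (half_pos hε)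
  filter_upwards [eventually_ne_atTop 0,
    tendsto_one_div_atTop_nhds_zero_nat.eventually (ge_mem_nhds hδ)] with n hn hnδ x hx
  have hslice : ContinuousOn (fun y => f (x, y)) (Icc 0 1) :=
    hf.comp (by fun_prop) fun y hy => ⟨hx, hy⟩
  rw [dist_comm, Real.dist_eq]
  refine (abs_sum_div_sub_integral_le hslice hn fun y hy z hz hyz => ?_).trans_lt (half_lt_self hε)
  have hdist : dist (x, y) (x, z) ≤ δ := by
    rw [Prod.dist_eq, dist_self, Real.dist_eq]
    exact max_le hδ.le (hyz.trans hnδ)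
  simpa only [Real.dist_eq] using hf_unif _ ⟨hx, hy⟩ _ ⟨hx, hz⟩ hdist

lemma abs_div_sub_self_le {a d M ε : ℝ} (ha : |a| ≤ M) (hd : |d - 1| ≤ ε) (hε : ε ≤ 1 / 2) :
    |a / d - a| ≤ 2 * M * ε := by
  have hd₀ : 1 / 2 ≤ d := by linarith [(abs_le.1 hd).1]
  have hM : 0 ≤ M := (abs_nonneg a).trans ha
  rw [show a / d - a = a * (1 - d) / d by field_simp, abs_div, abs_mul, abs_sub_comm,
    abs_of_pos (show 0 < d by linarith), div_le_iff₀ (by linarith)]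
  have hε₀ : 0 ≤ ε := (abs_nonneg _).trans hd
  nlinarith [mul_le_mul ha hd (abs_nonneg _) hM, mul_nonneg (mul_nonneg hM hε₀) (sub_nonneg.2 hd₀)]

lemma tendsto_sum_div_of_div_card_tendsto_one {a D : ∀ n : ℕ, Fin n → ℝ} {M l : ℝ}
    (ha : ∀ n p, |a n p| ≤ M) (hD : ∀ ε > 0, ∀ᶠ n in atTop, ∀ p, |D n p / n - 1| ≤ ε)
    (h : Tendsto (fun n => (∑ p, a n p) / n) atTop (𝓝 l)) :
    Tendsto (fun n => ∑ p, a n p / D n p) atTop (𝓝 l) := by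
  have hM : 0 ≤ M := (abs_nonneg _).trans (ha 1 ⟨0, one_pos⟩)
  suffices hdiff : Tendsto (fun n => ∑ p, a n p / D n p - (∑ p, a n p) / n) atTop (𝓝 0) by
    simpa using hdiff.add h
  rw [Metric.tendsto_nhds]
  intro ε hε
  set η := min (1 / 2) (ε / (2 * M + 1))
  have hη : 0 < η := lt_min (by norm_num) (by positivity)
  have hMη : 2 * M * η < ε := calc
    2 * M * η ≤ 2 * M * (ε / (2 * M + 1)) := by gcongr; exact min_le_right _ _
    _ < ε := by rw [mul_div_assoc', div_lt_iff₀ (by positivity)]; nlinarith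
  filter_upwards [hD η hη, eventually_ne_atTop 0] with n hn hn₀
  have hterm : ∀ p, a n p / D n p = a n p / (D n p / n) / n := fun p => by
    rw [div_div, div_mul_cancel₀ _ (Nat.cast_ne_zero.2 hn₀)]
  rw [dist_zero_right, Real.norm_eq_abs, Finset.sum_congr rfl fun p _ => hterm p,
    ← Finset.sum_div, ← sub_div, ← Finset.sum_sub_distrib, abs_div, Nat.abs_cast]
  refine (div_le_of_le_mul₀ n.cast_nonneg (by positivity) ?_).trans_lt hMη
  calc |∑ p, (a n p / (D n p / n) - a n p)| ≤ ∑ p, |a n p / (D n p / n) - a n p| :=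
        Finset.abs_sum_le_sum_abs _ _
    _ ≤ ∑ _p : Fin n, 2 * M * η :=
        Finset.sum_le_sum fun p _ => abs_div_sub_self_le (ha n p) (hn p) (min_le_left _ _)
    _ = 2 * M * η * n := by simp [mul_comm]

theorem stmt5_general (ρ : ℝ × ℝ → ℝ)
    (hcont : ContinuousOn ρ (Set.Icc 0 1 ×ˢ Set.Icc 0 1))
    (hmarg1 : ∀ x ∈ Set.Icc (0:ℝ) 1, ∫ y in (0:ℝ)..1, ρ (x, y) = 1)
    (σ : ∀ n : ℕ, Equiv.Perm (Fin n))
    (μ : Measure (ℝ × ℝ))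
    (hsupp : μ (Set.Icc (0:ℝ) 1 ×ˢ Set.Icc (0:ℝ) 1)ᶜ = 0)
    (hconv : ∀ f : ℝ × ℝ → ℝ, Continuous f → (∃ C, ∀ z, |f z| ≤ C) →
      Tendsto (fun n : ℕ =>
          (1 / (n : ℝ)) * ∑ i : Fin n, f (((i : ℕ) + 1 : ℝ) / n, (((σ n i : Fin n) : ℕ) + 1 : ℝ) / n))
        atTop (nhds (∫ z, f z ∂μ))) :
    Tendsto (fun n : ℕ =>
        ∑ p : Fin n,
          ρ (((p : ℕ) + 1 : ℝ) / n, (((σ n p : Fin n) : ℕ) + 1 : ℝ) / n) /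
            ∑ q : Fin n, ρ (((p : ℕ) + 1 : ℝ) / n, ((q : ℕ) + 1 : ℝ) / n))
      atTop (nhds (∫ z, ρ z ∂μ)) := by
  obtain ⟨g, hg, ⟨C, hC⟩, hgρ⟩ :=
    exists_continuous_bounded_eqOn_Icc_prod zero_le_one zero_le_one hcont
  have hgrid : ∀ {n : ℕ} (p : Fin n), ((p : ℕ) + 1 : ℝ) / n ∈ Icc (0:ℝ) 1 := fun p =>
    ⟨by positivity, div_le_one_of_le₀ (by exact_mod_cast p.isLt) (Nat.cast_nonneg _)⟩
  have hρg : ∀ {n : ℕ} (p q : Fin n), ρ (((p : ℕ) + 1 : ℝ) / n, ((q : ℕ) + 1 : ℝ) / n) =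
      g (((p : ℕ) + 1 : ℝ) / n, ((q : ℕ) + 1 : ℝ) / n) := fun p q =>
    (hgρ ⟨hgrid p, hgrid q⟩).symm
  have hS : Tendsto (fun n : ℕ => (∑ p : Fin n,
      ρ (((p : ℕ) + 1 : ℝ) / n, (((σ n p : Fin n) : ℕ) + 1 : ℝ) / n)) / n)
      atTop (𝓝 (∫ z, ρ z ∂μ)) := by
    rw [← integral_congr_ae (eventuallyEq_of_mem (mem_ae_iff.2 hsupp) hgρ)]
    simpa only [hρg, one_div_mul_eq_div] using
      hconv g hg ⟨C, fun z => Real.norm_eq_abs (g z) ▸ hC z⟩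
  have hrow : ∀ ε > 0, ∀ᶠ n : ℕ in atTop, ∀ p : Fin n,
      |(∑ q : Fin n, ρ (((p : ℕ) + 1 : ℝ) / n, ((q : ℕ) + 1 : ℝ) / n)) / n - 1| ≤ ε := by
    intro ε hε
    filter_upwards [Metric.tendstoUniformlyOn_iff.1
      (tendstoUniformlyOn_sum_div_integral isCompact_Icc hcont) ε hε] with n hn p
    have hp := (hn _ (hgrid p)).le
    rwa [hmarg1 _ (hgrid p), dist_comm, Real.dist_eq] at hp
  exact tendsto_sum_div_of_div_card_tendsto_one
    (fun n p => hρg p (σ n p) ▸ Real.norm_eq_abs _ ▸ hC _) hrow hS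

theorem stmt5 (ρ : ℝ × ℝ → ℝ)
    (hcont : ContinuousOn ρ (Set.Icc 0 1 ×ˢ Set.Icc 0 1))
    (hpos : ∀ z ∈ Set.Icc (0:ℝ) 1 ×ˢ Set.Icc (0:ℝ) 1, 0 < ρ z)
    (hmarg1 : ∀ x ∈ Set.Icc (0:ℝ) 1, ∫ y in (0:ℝ)..1, ρ (x, y) = 1)
    (hmarg2 : ∀ y ∈ Set.Icc (0:ℝ) 1, ∫ x in (0:ℝ)..1, ρ (x, y) = 1)
    (σ : ∀ n : ℕ, Equiv.Perm (Fin n))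
    (μ : Measure (ℝ × ℝ)) [IsProbabilityMeasure μ]
    (hsupp : μ (Set.Icc (0:ℝ) 1 ×ˢ Set.Icc (0:ℝ) 1)ᶜ = 0)
    (hconv : ∀ f : ℝ × ℝ → ℝ, Continuous f → (∃ C, ∀ z, |f z| ≤ C) →
      Tendsto (fun n : ℕ =>
          (1 / (n : ℝ)) * ∑ i : Fin n, f (((i : ℕ) + 1 : ℝ) / n, (((σ n i : Fin n) : ℕ) + 1 : ℝ) / n))
        atTop (nhds (∫ z, f z ∂μ))) :
    Tendsto (fun n : ℕ =>
        ∑ p : Fin n,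
          ρ (((p : ℕ) + 1 : ℝ) / n, (((σ n p : Fin n) : ℕ) + 1 : ℝ) / n) /
            ∑ q : Fin n, ρ (((p : ℕ) + 1 : ℝ) / n, ((q : ℕ) + 1 : ℝ) / n))
      atTop (nhds (∫ z, ρ z ∂μ)) :=
  stmt5_general ρ hcont hmarg1 σ μ hsupp hconv
end

section
/- Let {X_α}_{α ∈ I} be a finite family of Bernoulli random variables that are mutually independent, with p_α := E[X_α], λ := Σ_α p_α, W := Σ_α X_α. Then the total variation distance between the law of W and the Poisson(λ) distribution is at most Σ_{α ∈ I} p_α². -/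
/-!
The law of `W` is the convolution of the Bernoulli laws `Ber(p_α)`, and `Poi(λ)` is the
convolution of the laws `Poi(p_α)`. Convolving with a probability distribution does not increase
total variation distance, so `d_TV(W, Poi(λ)) ≤ ∑ d_TV(Ber(p_α), Poi(p_α))`, and a direct
computation gives `d_TV(Ber(p), Poi(p)) = p (1 - e^{-p}) ≤ p²`.
-/

open MeasureTheory ProbabilityTheory Finset
open scoped NNReal

namespace LeCam

noncomputable def tvDist {α : Type*} [MeasurableSpace α] (ν ν' : Measure α) : ℝ :=
  (∑' a, |ν.real {a} - ν'.real {a}|) / 2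

lemma tvDist_self {α : Type*} [MeasurableSpace α] (ν : Measure α) : tvDist ν ν = 0 := by
  simp [tvDist]

lemma two_mul_abs_tsum_indicator_le {β : Type*} {h : β → ℝ} (hh : HasSum h 0) (s : Set β) :
    2 * |∑' b, s.indicator h b| ≤ ∑' b, |h b| := by
  have hind : ∀ t : Set β, Summable fun b => ‖t.indicator h b‖ :=
    fun t => (hh.summable.indicator t).norm
  have hle : ∀ t : Set β, ‖∑' b, t.indicator h b‖ ≤ ∑' b, ‖t.indicator h b‖ :=
    fun t => norm_tsum_le_tsum_norm (hind t)
  have hcompl : ∑' b, s.indicator h b = -∑' b, sᶜ.indicator h b := by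
    rw [eq_neg_iff_add_eq_zero, ← (hh.summable.indicator s).tsum_add (hh.summable.indicator sᶜ)]
    simp only [Set.indicator_self_add_compl_apply, hh.tsum_eq]
  have hsplit : ∑' b, ‖s.indicator h b‖ + ∑' b, ‖sᶜ.indicator h b‖ = ∑' b, |h b| := by
    rw [← (hind s).tsum_add (hind sᶜ)]
    congr 1 with b
    by_cases hb : b ∈ s <;> simp [hb]
  have h1 := hle s
  have h2 := hle sᶜ
  rw [← norm_neg, ← hcompl] at h2
  simp only [Real.norm_eq_abs] at h1 h2 hsplit
  linarith

lemma hasSum_sum_antidiagonal_mul_of_nonneg {a b : ℕ → ℝ} {A B : ℝ} (ha0 : 0 ≤ a) (hb0 : 0 ≤ b)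
    (ha : HasSum a A) (hb : HasSum b B) :
    HasSum (fun n => ∑ kl ∈ antidiagonal n, a kl.1 * b kl.2) (A * B) := by
  have hna : Summable fun n => ‖a n‖ := by
    simpa only [Real.norm_of_nonneg (ha0 _)] using ha.summable
  have hnb : Summable fun n => ‖b n‖ := by
    simpa only [Real.norm_of_nonneg (hb0 _)] using hb.summable
  rw [← ha.tsum_eq, ← hb.tsum_eq, tsum_mul_tsum_eq_tsum_sum_antidiagonal_of_summable_norm hna hnb]
  exact (summable_norm_sum_mul_antidiagonal_of_summable_norm hna hnb).of_norm.hasSum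

lemma tsum_abs_sum_antidiagonal_sub_le {f g f' g' : ℕ → ℝ} (hf : Summable f)
    (hg0 : 0 ≤ g) (hg : HasSum g 1) (hf'0 : 0 ≤ f') (hf' : HasSum f' 1) (hg' : Summable g') :
    ∑' n, |∑ kl ∈ antidiagonal n, (f kl.1 * g kl.2 - f' kl.1 * g' kl.2)|
      ≤ ∑' n, |f n - f' n| + ∑' n, |g n - g' n| := by
  have hbound : ∀ n, |∑ kl ∈ antidiagonal n, (f kl.1 * g kl.2 - f' kl.1 * g' kl.2)|
      ≤ ∑ kl ∈ antidiagonal n, |f kl.1 - f' kl.1| * g kl.2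
        + ∑ kl ∈ antidiagonal n, f' kl.1 * |g kl.2 - g' kl.2| := by
    intro n
    rw [← sum_add_distrib]
    refine (abs_sum_le_sum_abs _ _).trans (sum_le_sum fun kl _ => ?_)
    calc |f kl.1 * g kl.2 - f' kl.1 * g' kl.2|
        = |(f kl.1 - f' kl.1) * g kl.2 + f' kl.1 * (g kl.2 - g' kl.2)| := by ring_nf
      _ ≤ _ := by
        refine (abs_add_le _ _).trans_eq ?_
        rw [abs_mul, abs_mul, abs_of_nonneg (hg0 _), abs_of_nonneg (hf'0 _)]
  have hsum := (hasSum_sum_antidiagonal_mul_of_nonneg (fun _ => abs_nonneg _) hg0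
    (hf.sub hf'.summable).abs.hasSum hg).add
    (hasSum_sum_antidiagonal_mul_of_nonneg hf'0 (fun _ => abs_nonneg _) hf' (hg.summable.sub hg').abs.hasSum)
  rw [mul_one, one_mul] at hsum
  rw [← hsum.tsum_eq]
  exact (hsum.summable.of_nonneg_of_le (fun _ => abs_nonneg _) hbound).tsum_le_tsum hbound
    hsum.summable

section CountableSpace

variable {α : Type*} [MeasurableSpace α] [Countable α] [MeasurableSingletonClass α]
  (ν ν' : Measure α)

lemma hasSum_indicator_measureReal_singleton [IsFiniteMeasure ν] (s : Set α) :
    HasSum (s.indicator fun a => ν.real {a}) (ν.real s) := by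
  have hsum := ν.tsum_indicator_apply_singleton s s.to_countable.measurableSet
  have hfin : ∀ a, s.indicator (fun a => ν {a}) a ≠ ⊤ := fun a => by
    by_cases ha : a ∈ s <;> simp [ha, measure_ne_top]
  have htoReal : s.indicator (fun a => ν.real {a})
      = fun a => (s.indicator (fun a => ν {a}) a).toReal := by
    funext a
    by_cases ha : a ∈ s <;> simp [ha, measureReal_def]
  rw [htoReal, measureReal_def, ← hsum, ENNReal.tsum_toReal_eq hfin]
  exact (ENNReal.summable_toReal (hsum ▸ measure_ne_top ν s)).hasSum

lemma hasSum_measureReal_singleton [IsProbabilityMeasure ν] : HasSum (fun a => ν.real {a}) 1 := by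
  simpa using hasSum_indicator_measureReal_singleton ν Set.univ

lemma abs_measureReal_sub_le_tvDist [IsProbabilityMeasure ν] [IsProbabilityMeasure ν']
    (s : Set α) : |ν.real s - ν'.real s| ≤ tvDist ν ν' := by
  have h := (hasSum_measureReal_singleton ν).sub (hasSum_measureReal_singleton ν')
  rw [sub_self] at h
  have hs : ν.real s - ν'.real s = ∑' a, s.indicator (fun a => ν.real {a} - ν'.real {a}) a := by
    rw [Set.indicator_sub, ((hasSum_indicator_measureReal_singleton ν s).sub
      (hasSum_indicator_measureReal_singleton ν' s)).tsum_eq]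
  have := two_mul_abs_tsum_indicator_le h s
  rw [tvDist, hs]
  linarith

end CountableSpace

section Nat

variable (ν ν' : Measure ℕ)

lemma measureReal_conv_singleton [IsFiniteMeasure ν] [IsFiniteMeasure ν'] (n : ℕ) :
    (ν ∗ ν').real {n} = ∑ kl ∈ antidiagonal n, ν.real {kl.1} * ν'.real {kl.2} := by
  have hpre : (fun kl : ℕ × ℕ => kl.1 + kl.2) ⁻¹' {n} = ↑(antidiagonal n) := by
    ext kl; simp
  rw [Measure.conv, map_measureReal_apply (measurable_of_countable _) (measurableSet_singleton n),
    hpre, ← sum_measureReal_singleton]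
  refine sum_congr rfl fun ⟨k, l⟩ _ => ?_
  rw [← Set.singleton_prod_singleton, measureReal_prod_prod]

lemma poissonMeasure_zero : poissonMeasure 0 = Measure.dirac 0 := by
  refine Measure.ext_of_measureReal_singleton fun n => ?_
  rw [poissonMeasure_real_singleton]
  rcases n with _ | n <;> simp [measureReal_def]

lemma tvDist_conv_le (ν₁ ν₂ ν₁' ν₂' : Measure ℕ) [IsProbabilityMeasure ν₁]
    [IsProbabilityMeasure ν₂] [IsProbabilityMeasure ν₁'] [IsProbabilityMeasure ν₂'] :
    tvDist (ν₁ ∗ ν₂) (ν₁' ∗ ν₂') ≤ tvDist ν₁ ν₁' + tvDist ν₂ ν₂' := by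
  have := tsum_abs_sum_antidiagonal_sub_le (hasSum_measureReal_singleton ν₁).summable
    (fun _ => measureReal_nonneg) (hasSum_measureReal_singleton ν₂)
    (fun _ => measureReal_nonneg) (hasSum_measureReal_singleton ν₁')
    (hasSum_measureReal_singleton ν₂').summable
  simp only [tvDist, measureReal_conv_singleton, ← sum_sub_distrib]
  linarith

lemma tvDist_poissonMeasure_le_sq [IsProbabilityMeasure ν] (q : ℝ≥0) (h1 : ν.real {1} = q)
    (h2 : ∀ n, ν.real {n + 2} = 0) : tvDist ν (poissonMeasure q) ≤ q ^ 2 := by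
  have hf := hasSum_measureReal_singleton ν
  have hg := hasSum_measureReal_singleton (poissonMeasure q)
  have htail : ∀ n, |ν.real {n + 2} - (poissonMeasure q).real {n + 2}|
      = (poissonMeasure q).real {n + 2} := fun n => by
    rw [h2, zero_sub, abs_neg, abs_of_nonneg measureReal_nonneg]
  have hsplit := (hf.sub hg).summable.abs.sum_add_tsum_nat_add 2
  have hsplit_f := hf.summable.sum_add_tsum_nat_add 2
  have hsplit_g := hg.summable.sum_add_tsum_nat_add 2
  rw [hf.tsum_eq] at hsplit_f
  rw [hg.tsum_eq] at hsplit_g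
  simp only [htail] at hsplit
  simp only [sum_range_succ, sum_range_zero, zero_add, h2, tsum_zero, h1]
    at hsplit hsplit_f hsplit_g
  have hg0 : (poissonMeasure q).real {0} = Real.exp (-q) := by simp [poissonMeasure_real_singleton]
  have hg1 : (poissonMeasure q).real {1} = Real.exp (-q) * q := by
    simp [poissonMeasure_real_singleton]
  have hexp : 1 - (q : ℝ) ≤ Real.exp (-q) := by linarith [Real.add_one_le_exp (-(q : ℝ))]
  have hexp_le_one : Real.exp (-q) ≤ 1 := Real.exp_le_one_iff.mpr (neg_nonpos.mpr q.2)
  rw [hg0, hg1, show ν.real {0} = 1 - q by linarith,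
    abs_of_nonpos (by linarith), abs_of_nonneg (by nlinarith [q.2])] at hsplit
  rw [hg0, hg1] at hsplit_g
  rw [tvDist, ← hsplit]
  nlinarith [mul_le_mul_of_nonneg_left (by linarith : 1 - Real.exp (-q) ≤ q) q.2]

end Nat

section RandomVariables

variable {Ω : Type*} [MeasurableSpace Ω] {μ : Measure Ω}

lemma integral_eq_measureReal_preimage_one {X : Ω → ℕ} (hX : Measurable X)
    (hBer : ∀ ω, X ω = 0 ∨ X ω = 1) : ∫ ω, (X ω : ℝ) ∂μ = μ.real (X ⁻¹' {1}) := by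
  have : (fun ω => (X ω : ℝ)) = (X ⁻¹' {1}).indicator 1 := by
    funext ω
    rcases hBer ω with h | h <;> simp [h]
  rw [this, integral_indicator_one (hX (measurableSet_singleton 1))]

variable [IsProbabilityMeasure μ]

lemma tvDist_map_poissonMeasure_le_sq {X : Ω → ℕ} (hX : Measurable X)
    (hBer : ∀ ω, X ω = 0 ∨ X ω = 1) {q : ℝ≥0} (hq : μ.real (X ⁻¹' {1}) = q) :
    tvDist (μ.map X) (poissonMeasure q) ≤ q ^ 2 := by
  have := Measure.isProbabilityMeasure_map (μ := μ) hX.aemeasurable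
  refine tvDist_poissonMeasure_le_sq _ q ?_ fun n => ?_
  · rwa [map_measureReal_apply hX (measurableSet_singleton 1)]
  · rw [map_measureReal_apply hX (measurableSet_singleton _)]
    convert measureReal_empty (μ := μ)
    ext ω
    rcases hBer ω with h | h <;> simp [h]

lemma tvDist_map_sum_poissonMeasure_le {I : Type*} {X : I → Ω → ℕ}
    (hmeas : ∀ α, Measurable (X α)) (hBer : ∀ α ω, X α ω = 0 ∨ X α ω = 1)
    (hind : iIndepFun X μ) {p : I → ℝ≥0} (hp : ∀ α, μ.real (X α ⁻¹' {1}) = p α)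
    (s : Finset I) :
    tvDist (μ.map (∑ α ∈ s, X α)) (poissonMeasure (∑ α ∈ s, p α)) ≤ ∑ α ∈ s, (p α : ℝ) ^ 2 := by
  classical
  induction s using Finset.induction_on with
  | empty =>
    rw [sum_empty, sum_empty, sum_empty, Pi.zero_def, Measure.map_const, measure_univ, one_smul,
      poissonMeasure_zero, tvDist_self]
  | insert a s ha ih =>
    have hsum : Measurable (∑ α ∈ s, X α) := by fun_prop
    have := Measure.isProbabilityMeasure_map (μ := μ) (hmeas a).aemeasurable
    have := Measure.isProbabilityMeasure_map (μ := μ) hsum.aemeasurable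
    rw [sum_insert ha, sum_insert ha, sum_insert ha, ← poissonMeasure_conv_poissonMeasure,
      (hind.indepFun_finsetSum_of_notMem hmeas ha).symm.map_add_eq_map_conv_map (hmeas a) hsum]
    exact (tvDist_conv_le _ _ _ _).trans
      (add_le_add (tvDist_map_poissonMeasure_le_sq (hmeas a) (hBer a) (hp a)) ih)

end RandomVariables

end LeCam

open LeCam in
/-- Poisson approximation for a sum of independent Bernoulli random variables:
for every set `s ⊆ ℕ`, the difference between `P(W ∈ s)` and `Poi(λ)(s)` is at most
`∑ p_α²`, i.e. the total variation distance is at most `∑ p_α²`. -/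
theorem stmt7 {Ω : Type*} [MeasurableSpace Ω] (μ : Measure Ω) [IsProbabilityMeasure μ]
    {I : Type*} [Fintype I] (X : I → Ω → ℕ)
    (hmeas : ∀ α, Measurable (X α))
    (hBer : ∀ α ω, X α ω = 0 ∨ X α ω = 1)
    (hind : ProbabilityTheory.iIndepFun X μ)
    (p : I → ℝ) (hp : ∀ α, p α = ∫ ω, (X α ω : ℝ) ∂μ)
    (lam : ℝ) (hlam : lam = ∑ α, p α) :
    ∀ s : Set ℕ,
      |(μ {ω | (∑ α, X α ω) ∈ s}).toReal -
          ∑' k : ℕ, Set.indicator s (fun k => Real.exp (-lam) * lam ^ k / k.factorial) k|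
        ≤ ∑ α, (p α) ^ 2 := by
  intro s
  have hp_eq : ∀ α, p α = μ.real (X α ⁻¹' {1}) := fun α =>
    (hp α).trans (integral_eq_measureReal_preimage_one (hmeas α) (hBer α))
  let q : I → ℝ≥0 := fun α => ⟨p α, hp_eq α ▸ measureReal_nonneg⟩
  have hlam_q : lam = ((∑ α, q α : ℝ≥0) : ℝ) := by rw [hlam, NNReal.coe_sum]; rfl
  have hW_meas : Measurable (∑ α, X α) := by fun_prop
  have := Measure.isProbabilityMeasure_map (μ := μ) hW_meas.aemeasurable
  have hW : (μ {ω | (∑ α, X α ω) ∈ s}).toReal = (μ.map (∑ α, X α)).real s := by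
    rw [map_measureReal_apply hW_meas MeasurableSet.of_discrete, measureReal_def]
    simp only [Set.preimage, Finset.sum_apply]
  have hPo : ∑' k, s.indicator (fun k => Real.exp (-lam) * lam ^ k / k.factorial) k
      = (poissonMeasure (∑ α, q α)).real s := by
    rw [← (hasSum_indicator_measureReal_singleton _ s).tsum_eq, hlam_q]
    simp only [poissonMeasure_real_singleton]
  rw [hW, hPo]
  exact (abs_measureReal_sub_le_tvDist _ _ s).trans
    (tvDist_map_sum_poissonMeasure_le (p := q) hmeas hBer hind (fun α => (hp_eq α).symm) univ)
end

section
/- Fix θ ∈ ℝ and let R_{n,θ} be the probability distribution on S_n with R_{n,θ}(π) = e^{θ·fix(π) − Z_n(θ)}, where fix(π) is the number of fixed points and Z_n(θ) is the log-normalizing constant. Then for every λ ∈ ℝ, the moment generating function E_{R_{n,θ}}[e^{λ·fix(π_n)}] = e^{Z_n(θ+λ) − Z_n(θ)} converges to exp(e^θ(e^λ − 1)) as n → ∞; consequently fix(π_n) under R_{n,θ} converges in distribution to Poisson(e^θ). -/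
/-!
Writing `x ^ fix σ = ((x - 1) + 1) ^ fix σ` as a sum over subsets of the fixed points and
counting the permutations that fix a given `j`-set pointwise (there are `(n - j)!`) gives
`∑ σ, x ^ fix σ = n! ∑_{j ≤ n} (x - 1) ^ j / j!`. With `x = e^θ`, `e^{Z_n(θ)}` is `n!` times a
partial sum of the series of `exp (e^θ - 1)`, so the moment generating function is a ratio of two
such partial sums and converges to `exp (e^{θ+λ} - 1) / exp (e^θ - 1)`. For the point
probabilities, exactly `C(n, k) D_{n-k}` permutations have `k` fixed points, where `D_m` counts
the derangements of `m` points, and `D_m / m! → e⁻¹`.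
-/

open Filter

/-- The number of fixed points of a permutation of `{1,...,n}`. -/
def fixpts {n : ℕ} (π : Equiv.Perm (Fin n)) : ℕ :=
  (Finset.univ.filter fun i => π i = i).card

/-- The log-normalizing constant `Z_n(θ) = log ∑_{π ∈ S_n} e^{θ·fix(π)}`. -/
noncomputable def Zfix (n : ℕ) (θ : ℝ) : ℝ :=
  Real.log (∑ π : Equiv.Perm (Fin n), Real.exp (θ * fixpts π))

open Finset Nat Topology

namespace Equiv.Perm

variable {α : Type*} [Fintype α] [DecidableEq α]

theorem card_filter_forall_mem_apply_eq (t : Finset α) :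
    #{σ : Perm α | ∀ a ∈ t, σ a = a} = (Fintype.card α - #t)! := by
  rw [← Fintype.card_subtype, ← Fintype.card_congr
    ((Perm.subtypeEquivSubtypePerm (· ∉ t)).trans
      (subtypeEquivRight fun σ => by simp only [not_not])),
    Fintype.card_perm, Fintype.card_subtype_compl, Fintype.card_coe]

theorem card_filter_fixedPoints_eq (t : Finset α) :
    #{σ : Perm α | ({a | σ a = a} : Finset α) = t} =
      numDerangements (Fintype.card α - #t) := by
  rw [← Fintype.card_subtype, ← Fintype.card_congr
    ((derangements.subtypeEquiv (· ∉ t)).trans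
      (subtypeEquivRight fun σ => by simp [Finset.ext_iff, Function.IsFixedPt, iff_comm])),
    card_derangements_eq_numDerangements, Fintype.card_subtype_compl, Fintype.card_coe]

theorem card_filter_card_fixedPoints_eq (k : ℕ) :
    #{σ : Perm α | #{a | σ a = a} = k} =
      (Fintype.card α).choose k * numDerangements (Fintype.card α - k) := by
  have fiber (t) (ht : t ∈ powersetCard k univ) :
      #{σ ∈ {σ : Perm α | #{a | σ a = a} = k} | ({a | σ a = a} : Finset α) = t} =
        numDerangements (Fintype.card α - k) := by
    obtain ⟨-, rfl⟩ := mem_powersetCard.1 ht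
    rw [filter_filter, ← card_filter_fixedPoints_eq]
    congr 1
    exact filter_congr fun σ _ => and_iff_right_of_imp fun h => h ▸ rfl
  rw [card_eq_sum_card_fiberwise (f := fun σ : Perm α => ({a | σ a = a} : Finset α))
    (t := powersetCard k univ) (fun σ hσ => by simp_all [mem_powersetCard]),
    sum_congr rfl fiber, sum_const, card_powersetCard, Finset.card_univ, smul_eq_mul]

theorem sum_pow_card_fixedPoints {R : Type*} [CommRing R] (x : R) :
    ∑ σ : Perm α, x ^ #{a | σ a = a} =
      ∑ j ∈ range (Fintype.card α + 1),
        ((Fintype.card α).choose j * (Fintype.card α - j)! : ℕ) * (x - 1) ^ j := by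
  have binomial (s : Finset α) : x ^ #s = ∑ t ∈ s.powerset, (x - 1) ^ #t := by
    simpa using (sum_pow_mul_eq_add_pow (x - 1) 1 s).symm
  calc ∑ σ : Perm α, x ^ #{a | σ a = a}
      = ∑ σ : Perm α, ∑ t : Finset α, if ∀ a ∈ t, σ a = a then (x - 1) ^ #t else 0 := by
        refine sum_congr rfl fun σ _ => ?_
        rw [binomial, ← sum_filter]
        congr 1
        ext t
        simp [subset_iff]
    _ = ∑ t ∈ (univ : Finset α).powerset, ((Fintype.card α - #t)! : R) * (x - 1) ^ #t := by
        rw [sum_comm, powerset_univ]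
        refine sum_congr rfl fun t _ => ?_
        rw [← sum_filter, sum_const, card_filter_forall_mem_apply_eq, nsmul_eq_mul]
    _ = _ := by
        rw [sum_powerset_apply_card (fun j => ((Fintype.card α - j)! : R) * (x - 1) ^ j),
          Finset.card_univ]
        simp [mul_assoc]

theorem sum_pow_card_fixedPoints_eq_factorial_mul {K : Type*} [Field K] [CharZero K] (x : K) :
    ∑ σ : Perm α, x ^ #{a | σ a = a} =
      (Fintype.card α)! * ∑ j ∈ range (Fintype.card α + 1), (x - 1) ^ j / j ! := by
  rw [sum_pow_card_fixedPoints, mul_sum]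
  refine sum_congr rfl fun j hj => ?_
  have hc : ((Fintype.card α).choose j * j ! * (Fintype.card α - j)! : K) =
      (Fintype.card α)! := by
    exact_mod_cast choose_mul_factorial_mul_factorial (Nat.lt_succ_iff.1 (mem_range.1 hj))
  have : (j ! : K) ≠ 0 := Nat.cast_ne_zero.2 j.factorial_ne_zero
  rw [← hc]
  push_cast
  field_simp

end Equiv.Perm

noncomputable def expTrunc (n : ℕ) (y : ℝ) : ℝ :=
  ∑ j ∈ range (n + 1), y ^ j / j !

theorem tendsto_expTrunc (y : ℝ) : Tendsto (fun n => expTrunc n y) atTop (𝓝 (Real.exp y)) := by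
  have h := (NormedSpace.expSeries_div_hasSum_exp y).tendsto_sum_nat
  rw [← Real.exp_eq_exp_ℝ] at h
  exact h.comp (tendsto_add_atTop_nat 1)

theorem exp_Zfix_eq_sum (n : ℕ) (θ : ℝ) :
    Real.exp (Zfix n θ) = ∑ π : Equiv.Perm (Fin n), Real.exp (θ * fixpts π) :=
  Real.exp_log (sum_pos (fun _ _ => Real.exp_pos _) univ_nonempty)

theorem exp_Zfix (n : ℕ) (θ : ℝ) :
    Real.exp (Zfix n θ) = n ! * expTrunc n (Real.exp θ - 1) := by
  simp_rw [exp_Zfix_eq_sum, mul_comm θ, Real.exp_nat_mul, fixpts]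
  rw [Equiv.Perm.sum_pow_card_fixedPoints_eq_factorial_mul, Fintype.card_fin, expTrunc]

theorem expTrunc_exp_sub_one_pos (n : ℕ) (θ : ℝ) : 0 < expTrunc n (Real.exp θ - 1) := by
  have h := Real.exp_pos (Zfix n θ)
  rw [exp_Zfix] at h
  exact pos_of_mul_pos_right h (by positivity)

theorem mgf_fixpts (n : ℕ) (θ lam : ℝ) :
    ∑ π : Equiv.Perm (Fin n), Real.exp (θ * fixpts π - Zfix n θ) * Real.exp (lam * fixpts π)
      = Real.exp (Zfix n (θ + lam) - Zfix n θ) := by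
  simp_rw [← Real.exp_add, sub_add_eq_add_sub, ← add_mul, Real.exp_sub, ← sum_div,
    exp_Zfix_eq_sum]

theorem tendsto_exp_Zfix_sub (θ lam : ℝ) :
    Tendsto (fun n : ℕ => Real.exp (Zfix n (θ + lam) - Zfix n θ)) atTop
      (𝓝 (Real.exp (Real.exp θ * (Real.exp lam - 1)))) := by
  have ratio (n : ℕ) : Real.exp (Zfix n (θ + lam) - Zfix n θ) =
      expTrunc n (Real.exp (θ + lam) - 1) / expTrunc n (Real.exp θ - 1) := by
    rw [Real.exp_sub, exp_Zfix, exp_Zfix, mul_div_mul_left _ _ (by positivity)]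
  have limit : Real.exp (Real.exp (θ + lam) - 1) / Real.exp (Real.exp θ - 1) =
      Real.exp (Real.exp θ * (Real.exp lam - 1)) := by
    rw [← Real.exp_sub, Real.exp_add]
    ring_nf
  simp_rw [ratio, ← limit]
  exact (tendsto_expTrunc _).div (tendsto_expTrunc _) (Real.exp_pos _).ne'

theorem card_filter_fixpts_eq (n k : ℕ) :
    #{π : Equiv.Perm (Fin n) | fixpts π = k} = n.choose k * numDerangements (n - k) := by
  have h := Equiv.Perm.card_filter_card_fixedPoints_eq (α := Fin n) k
  rwa [Fintype.card_fin] at h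

theorem sum_filter_fixpts_eq (θ : ℝ) {n k : ℕ} (hk : k ≤ n) :
    ∑ π ∈ univ.filter (fun π : Equiv.Perm (Fin n) => fixpts π = k),
        Real.exp (θ * fixpts π - Zfix n θ)
      = (numDerangements (n - k) / (n - k)! : ℝ) *
          (Real.exp θ ^ k / (k ! * expTrunc n (Real.exp θ - 1))) := by
  have hc : (n.choose k * k ! * (n - k)! : ℝ) = n ! := by
    exact_mod_cast choose_mul_factorial_mul_factorial hk
  have hT := (expTrunc_exp_sub_one_pos n θ).ne'
  have hchoose : (n.choose k : ℝ) ≠ 0 := Nat.cast_ne_zero.2 (choose_pos hk).ne'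
  rw [sum_congr rfl fun π hπ => by rw [(mem_filter.1 hπ).2], sum_const, nsmul_eq_mul,
    card_filter_fixpts_eq, Real.exp_sub, exp_Zfix, mul_comm θ, Real.exp_nat_mul, ← hc]
  field_simp
  push_cast
  ring

theorem tendsto_sum_filter_fixpts_eq (θ : ℝ) (k : ℕ) :
    Tendsto (fun n : ℕ =>
        ∑ π ∈ univ.filter (fun π : Equiv.Perm (Fin n) => fixpts π = k),
          Real.exp (θ * fixpts π - Zfix n θ)) atTop
      (𝓝 (Real.exp (-Real.exp θ) * Real.exp θ ^ k / k !)) := by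
  have limit : Real.exp (-1) * (Real.exp θ ^ k / (k ! * Real.exp (Real.exp θ - 1))) =
      Real.exp (-Real.exp θ) * Real.exp θ ^ k / k ! := by
    rw [Real.exp_sub, Real.exp_neg, Real.exp_neg]
    field_simp
  rw [← limit]
  refine Tendsto.congr'
    ((eventually_ge_atTop k).mono fun n hk => (sum_filter_fixpts_eq θ hk).symm) ?_
  refine (numDerangements_tendsto_inv_e.comp (tendsto_sub_atTop_nat k)).mul ?_
  exact tendsto_const_nhds.div ((tendsto_expTrunc _).const_mul _) (by positivity)

theorem stmt9 (θ lam : ℝ) :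
    (∀ n : ℕ,
      ∑ π : Equiv.Perm (Fin n),
          Real.exp (θ * fixpts π - Zfix n θ) * Real.exp (lam * fixpts π)
        = Real.exp (Zfix n (θ + lam) - Zfix n θ)) ∧
    Tendsto (fun n : ℕ => Real.exp (Zfix n (θ + lam) - Zfix n θ)) atTop
      (nhds (Real.exp (Real.exp θ * (Real.exp lam - 1)))) ∧
    ∀ k : ℕ,
      Tendsto (fun n : ℕ =>
          ∑ π ∈ Finset.univ.filter (fun π : Equiv.Perm (Fin n) => fixpts π = k),
            Real.exp (θ * fixpts π - Zfix n θ)) atTop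
        (nhds (Real.exp (-Real.exp θ) * Real.exp θ ^ k / k.factorial)) :=
  ⟨fun n => mgf_fixpts n θ lam, tendsto_exp_Zfix_sub θ lam, tendsto_sum_filter_fixpts_eq θ⟩
end

section
/- Fix θ ∈ ℝ and let R_{n,θ}(π) = e^{θ·fix(π) − Z_n(θ)} on S_n, and let P_n = R_{n,0} be the uniform distribution on S_n. Then the Kullback–Leibler divergence D(P_n || R_{n,θ}) = log(e^{Z_n(θ)}/n!) − θ·E_{P_n}[fix(π_n)] converges to e^θ − 1 − θ as n → ∞. -/
/-!
Writing `e^{θ fix σ} = (1 + y)^{fix σ}` with `y = e^θ - 1` and expanding over the subsets `s` of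
the fixed points of `σ`, then exchanging sums, each `s` is counted by the `(n - |s|)!`
permutations fixing it pointwise. Hence `e^{Z_n(θ)} / n! = ∑_{k ≤ n} y^k / k!`, a partial sum of
`e^y`, so `log (e^{Z_n(θ)} / n!) → e^θ - 1`; the same count with `|s| = 1` gives `E[fix] = 1`.
-/

open Filter

open Finset Equiv

section PermFixing

variable {α : Type*} [Fintype α] [DecidableEq α]

theorem card_perm_fixing (s : Finset α) :
    #{σ : Perm α | ∀ a ∈ s, σ a = a} = (Fintype.card α - #s).factorial := by
  rw [← Fintype.card_subtype]
  have hfix : {σ : Perm α // ∀ a ∈ s, σ a = a} ≃ {σ : Perm α // ∀ a, ¬a ∉ s → σ a = a} :=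
    Equiv.subtypeEquivRight fun σ => by simp only [not_not]
  rw [Fintype.card_congr (hfix.trans (Perm.subtypeEquivSubtypePerm (· ∉ s)).symm),
    Fintype.card_perm, Fintype.card_subtype, filter_not, filter_mem_eq_inter, univ_inter,
    ← compl_eq_univ_sdiff, card_compl]

theorem sum_perm_one_add_pow_card_fixed {K : Type*} [Field K] [CharZero K] (y : K) :
    ∑ σ : Perm α, (1 + y) ^ #{a | σ a = a}
      = (Fintype.card α).factorial * ∑ k ∈ range (Fintype.card α + 1), y ^ k / k.factorial := by
  set n := Fintype.card α
  have hexpand (σ : Perm α) :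
      (1 + y) ^ #{a | σ a = a} = ∑ s : Finset α, if ∀ a ∈ s, σ a = a then y ^ #s else 0 := by
    rw [← prod_const, prod_one_add, ← sum_filter]
    refine sum_congr (by ext s; simp [subset_iff]) fun s _ => prod_const y
  calc ∑ σ : Perm α, (1 + y) ^ #{a | σ a = a}
      = ∑ s : Finset α, ((n - #s).factorial : K) * y ^ #s := by
        simp_rw [hexpand]
        rw [sum_comm]
        refine sum_congr rfl fun s _ => ?_
        rw [← sum_filter, sum_const, card_perm_fixing, nsmul_eq_mul]
    _ = ∑ k ∈ range (n + 1), n.choose k • (((n - k).factorial : K) * y ^ k) := by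
        rw [← powerset_univ, sum_powerset_apply_card (fun k => ((n - k).factorial : K) * y ^ k),
          card_univ]
    _ = n.factorial * ∑ k ∈ range (n + 1), y ^ k / k.factorial := by
        rw [mul_sum]
        refine sum_congr rfl fun k hk => ?_
        have hkn : k ≤ n := Nat.lt_succ_iff.mp (mem_range.mp hk)
        rw [nsmul_eq_mul, ← Nat.choose_mul_factorial_mul_factorial hkn]
        have hk! : (k.factorial : K) ≠ 0 := Nat.cast_ne_zero.mpr k.factorial_ne_zero
        push_cast
        field_simp

theorem sum_perm_card_fixed [Nonempty α] :
    ∑ σ : Perm α, #{a | σ a = a} = (Fintype.card α).factorial := by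
  simp_rw [card_filter]
  rw [sum_comm]
  have hstab (a : α) :
      ∑ σ : Perm α, (if σ a = a then 1 else 0) = (Fintype.card α - 1).factorial := by
    rw [← card_filter, ← card_singleton a, ← card_perm_fixing]
    simp
  simp_rw [hstab, sum_const, card_univ, smul_eq_mul, Nat.mul_factorial_pred Fintype.card_ne_zero]

end PermFixing

theorem sum_inv_card_mul_log_div_exp {ι : Type*} [Fintype ι] [Nonempty ι] (g : ι → ℝ) (Z : ℝ) :
    ∑ i, (1 / (Fintype.card ι : ℝ)) * Real.log ((1 / (Fintype.card ι : ℝ)) / Real.exp (g i - Z))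
      = Real.log (Real.exp Z / Fintype.card ι) - (∑ i, g i) / Fintype.card ι := by
  have hN : (Fintype.card ι : ℝ) ≠ 0 := by positivity
  have hterm (i : ι) : Real.log ((1 / (Fintype.card ι : ℝ)) / Real.exp (g i - Z))
      = Z - Real.log (Fintype.card ι) - g i := by
    rw [Real.log_div (by positivity) (Real.exp_ne_zero _), Real.log_exp, one_div, Real.log_inv]
    ring
  simp_rw [hterm, ← mul_sum, sum_sub_distrib, sum_const, card_univ, nsmul_eq_mul,
    Real.log_div (Real.exp_ne_zero _) hN, Real.log_exp]
  field_simp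

theorem exp_Zfix_div_factorial (n : ℕ) (θ : ℝ) :
    Real.exp (Zfix n θ) / n.factorial
      = ∑ k ∈ range (n + 1), (Real.exp θ - 1) ^ k / k.factorial := by
  have hsum_pos : 0 < ∑ σ : Perm (Fin n), Real.exp (θ * fixpts σ) :=
    sum_pos (fun σ _ => Real.exp_pos _) univ_nonempty
  have hexp (σ : Perm (Fin n)) : Real.exp (θ * fixpts σ) = (1 + (Real.exp θ - 1)) ^ fixpts σ := by
    rw [add_sub_cancel, ← Real.exp_nat_mul, mul_comm]
  rw [Zfix, Real.exp_log hsum_pos, sum_congr rfl fun σ _ => hexp σ]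
  simp only [fixpts]
  rw [sum_perm_one_add_pow_card_fixed, Fintype.card_fin, mul_div_cancel_left₀ _ (by positivity)]

theorem tendsto_log_exp_Zfix_div_factorial (θ : ℝ) :
    Tendsto (fun n => Real.log (Real.exp (Zfix n θ) / n.factorial)) atTop
      (nhds (Real.exp θ - 1)) := by
  have hpartial : Tendsto (fun n => ∑ k ∈ range (n + 1), (Real.exp θ - 1) ^ k / k.factorial)
      atTop (nhds (Real.exp (Real.exp θ - 1))) := by
    rw [Real.exp_eq_exp_ℝ]
    exact (NormedSpace.expSeries_div_hasSum_exp _).tendsto_sum_nat.comp (tendsto_add_atTop_nat 1)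
  simpa only [exp_Zfix_div_factorial, Real.log_exp, Function.comp_def] using
    ((Real.continuousAt_log (Real.exp_pos _).ne').tendsto.comp hpartial)

theorem mean_fixpts_eq_one {n : ℕ} (hn : 1 ≤ n) :
    (∑ π : Perm (Fin n), (fixpts π : ℝ)) / n.factorial = 1 := by
  have : Nonempty (Fin n) := ⟨⟨0, hn⟩⟩
  simp only [fixpts]
  rw [← Nat.cast_sum, sum_perm_card_fixed, Fintype.card_fin, div_self (by positivity)]

theorem stmt11 (θ : ℝ) :
    (∀ n : ℕ,
      ∑ π : Equiv.Perm (Fin n),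
          (1 / (n.factorial : ℝ)) *
            Real.log ((1 / (n.factorial : ℝ)) / Real.exp (θ * fixpts π - Zfix n θ))
        = Real.log (Real.exp (Zfix n θ) / n.factorial)
            - θ * ((∑ π : Equiv.Perm (Fin n), (fixpts π : ℝ)) / n.factorial)) ∧
    Tendsto (fun n : ℕ =>
        Real.log (Real.exp (Zfix n θ) / n.factorial)
          - θ * ((∑ π : Equiv.Perm (Fin n), (fixpts π : ℝ)) / n.factorial)) atTop
      (nhds (Real.exp θ - 1 - θ)) := by
  refine ⟨fun n => ?_, ?_⟩
  · have hcard : Fintype.card (Perm (Fin n)) = n.factorial := by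
      rw [Fintype.card_perm, Fintype.card_fin]
    rw [← hcard, sum_inv_card_mul_log_div_exp, ← mul_sum, mul_div_assoc]
  · refine (tendsto_log_exp_Zfix_div_factorial θ).sub (tendsto_const_nhds.congr' ?_)
    filter_upwards [eventually_ge_atTop 1] with n hn
    rw [mean_fixpts_eq_one hn, mul_one]
end

section
/- Let f : [0,1]² → ℝ be continuous, θ ∈ ℝ, and suppose μ is a probability measure on [0,1]² with uniform marginals and density of the form g(x,y) = exp(θ f(x,y) + a(x) + b(y)) with exp(b(·)) integrable over [0,1]. Then e^{−a(x)} = ∫₀¹ e^{θ f(x,y) + b(y)} dy for almost every x, and |e^{−a(x₁)} − e^{−a(x₂)}| ≤ sup_{y∈[0,1]} |e^{θ f(x₁,y)} − e^{θ f(x₂,y)}| · ∫₀¹ e^{b(y)} dy; consequently x ↦ e^{−a(x)} admits a continuous version, so g admits a continuous version. -/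
/-!
Integrating the density `e^{a x} K x y e^{b y}`, with `K = exp (θ f)`, in `y` gives
`e^{-a x} = A x := ∫ K x y e^{b y} dy`, and `A` is continuous and positive by dominated
convergence, `K` being bounded on the compact square. Integrating in `x` and substituting
`e^{a x} = (A x)⁻¹` in turn gives `e^{-b y} = B y := ∫ K x y (A x)⁻¹ dx` almost everywhere, again
continuous and positive, so `(A x)⁻¹ K x y (B y)⁻¹` is a continuous version of the density.
-/

open MeasureTheory Set Function
open scoped Interval

theorem ContinuousOn.intervalIntegral_mul {X : Type*} [TopologicalSpace X]
    [FirstCountableTopology X] {μ : Measure ℝ} {s : Set X} {a b : ℝ} {K : X → ℝ → ℝ}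
    {w : ℝ → ℝ} (hK : ContinuousOn (uncurry K) (s ×ˢ Icc a b)) (hs : IsCompact s)
    (hab : a ≤ b) (hw : IntervalIntegrable w μ a b) :
    ContinuousOn (fun x => ∫ y in a..b, K x y * w y ∂μ) s := by
  obtain ⟨C, hC⟩ := (hs.prod isCompact_Icc).exists_bound_of_continuousOn hK
  have hΙ : Ι a b ⊆ Icc a b := by rw [uIoc_of_le hab]; exact Ioc_subset_Icc_self
  intro x₀ hx₀
  refine intervalIntegral.continuousWithinAt_of_dominated_interval
    (bound := fun y => C * ‖w y‖) ?_ ?_ (hw.norm.const_mul C) ?_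
  · filter_upwards [self_mem_nhdsWithin] with x hx
    exact (((hK.uncurry_left x hx).mono hΙ).aestronglyMeasurable measurableSet_uIoc).mul
      hw.def'.aestronglyMeasurable
  · filter_upwards [self_mem_nhdsWithin] with x hx
    refine ae_of_all _ fun y hy => ?_
    rw [norm_mul]
    exact mul_le_mul_of_nonneg_right (hC (x, y) ⟨hx, hΙ hy⟩) (norm_nonneg _)
  · refine ae_of_all _ fun y hy => ?_
    exact ((hK.uncurry_right y (hΙ hy)).continuousWithinAt hx₀).mul continuousWithinAt_const

theorem abs_intervalIntegral_mul_sub_le {μ : Measure ℝ} {a b : ℝ} {u₁ u₂ w : ℝ → ℝ}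
    (hab : a ≤ b) (hu₁ : ContinuousOn u₁ (Icc a b)) (hu₂ : ContinuousOn u₂ (Icc a b))
    (hw : IntervalIntegrable w μ a b) (hw₀ : ∀ y ∈ Icc a b, 0 ≤ w y) :
    |(∫ y in a..b, u₁ y * w y ∂μ) - ∫ y in a..b, u₂ y * w y ∂μ|
      ≤ (⨆ y : Icc a b, |u₁ y - u₂ y|) * ∫ y in a..b, w y ∂μ := by
  set M := ⨆ y : Icc a b, |u₁ y - u₂ y|
  have hM : ∀ y ∈ Icc a b, |u₁ y - u₂ y| ≤ M := fun y hy =>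
    le_ciSup (isCompact_range ((hu₁.sub hu₂).abs.domRestrict)).bddAbove ⟨y, hy⟩
  have hi₁ := hw.continuousOn_mul (uIcc_of_le hab ▸ hu₁)
  have hi₂ := hw.continuousOn_mul (uIcc_of_le hab ▸ hu₂)
  calc |(∫ y in a..b, u₁ y * w y ∂μ) - ∫ y in a..b, u₂ y * w y ∂μ|
      = |∫ y in a..b, (u₁ y - u₂ y) * w y ∂μ| := by
        rw [← intervalIntegral.integral_sub hi₁ hi₂]; simp only [sub_mul]
    _ ≤ ∫ y in a..b, |(u₁ y - u₂ y) * w y| ∂μ :=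
        intervalIntegral.abs_integral_le_integral_abs hab
    _ ≤ ∫ y in a..b, M * w y ∂μ := by
        refine intervalIntegral.integral_mono_on hab
          (hw.continuousOn_mul (uIcc_of_le hab ▸ hu₁.sub hu₂)).abs (hw.const_mul M) fun y hy => ?_
        rw [abs_mul, abs_of_nonneg (hw₀ y hy)]
        exact mul_le_mul_of_nonneg_right (hM y hy) (hw₀ y hy)
    _ = M * ∫ y in a..b, w y ∂μ := intervalIntegral.integral_const_mul M _

theorem intervalIntegral_mul_pos {a b : ℝ} {u w : ℝ → ℝ} (hab : a < b)
    (hu : ContinuousOn u (Icc a b)) (hw : IntervalIntegrable w volume a b)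
    (hu₀ : ∀ y ∈ Icc a b, 0 < u y) (hw₀ : ∀ y ∈ Icc a b, 0 < w y) :
    0 < ∫ y in a..b, u y * w y :=
  intervalIntegral.intervalIntegral_pos_of_pos_on
    (hw.continuousOn_mul (uIcc_of_le hab.le ▸ hu))
    (fun y hy => mul_pos (hu₀ y (Ioo_subset_Icc_self hy)) (hw₀ y (Ioo_subset_Icc_self hy))) hab

theorem inv_eq_of_intervalIntegral_const_mul_eq_one {μ : Measure ℝ} {a b c : ℝ} {F : ℝ → ℝ}
    (h : ∫ y in a..b, c * F y ∂μ = 1) : c⁻¹ = ∫ y in a..b, F y ∂μ := by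
  rw [intervalIntegral.integral_const_mul] at h
  exact (eq_inv_of_mul_eq_one_right h).symm

theorem MeasureTheory.Measure.ae_restrict_prod_of_ae_restrict {α β : Type*}
    [MeasurableSpace α] [MeasurableSpace β] {μ : Measure α} {ν : Measure β} [SFinite μ]
    [SFinite ν] {s : Set α} {t : Set β} {p : α → Prop} {q : β → Prop}
    (hp : ∀ᵐ x ∂μ.restrict s, p x) (hq : ∀ᵐ y ∂ν.restrict t, q y) :
    ∀ᵐ z ∂(μ.prod ν).restrict (s ×ˢ t), p z.1 ∧ q z.2 := by
  rw [← Measure.prod_restrict]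
  exact (Measure.quasiMeasurePreserving_fst.ae hp).and (Measure.quasiMeasurePreserving_snd.ae hq)

theorem exists_continuousOn_ae_eq_of_marginals_eq_one {a b : ℝ} (hab : a < b)
    {K : ℝ → ℝ → ℝ} {α β : ℝ → ℝ} (hK : ContinuousOn (uncurry K) (Icc a b ×ˢ Icc a b))
    (hK₀ : ∀ x ∈ Icc a b, ∀ y ∈ Icc a b, 0 < K x y) (hβ : IntegrableOn β (Icc a b))
    (hβ₀ : ∀ y ∈ Icc a b, 0 < β y)
    (h₁ : ∀ᵐ x ∂volume.restrict (Icc a b), ∫ y in a..b, α x * K x y * β y = 1)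
    (h₂ : ∀ᵐ y ∂volume.restrict (Icc a b), ∫ x in a..b, α x * K x y * β y = 1) :
    ∃ α' β' : ℝ → ℝ, ContinuousOn α' (Icc a b) ∧ ContinuousOn β' (Icc a b) ∧
      α =ᵐ[volume.restrict (Icc a b)] α' ∧ β =ᵐ[volume.restrict (Icc a b)] β' := by
  set A : ℝ → ℝ := fun x => ∫ y in a..b, K x y * β y
  have hβi : IntervalIntegrable β volume a b :=
    (intervalIntegrable_iff_integrableOn_Icc_of_le hab.le).2 hβ
  have hA : ContinuousOn A (Icc a b) := hK.intervalIntegral_mul isCompact_Icc hab.le hβi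
  have hA₀ : ∀ x ∈ Icc a b, 0 < A x := fun x hx =>
    intervalIntegral_mul_pos hab (hK.uncurry_left x hx) hβi (hK₀ x hx) hβ₀
  have hα : α =ᵐ[volume.restrict (Icc a b)] fun x => (A x)⁻¹ := by
    filter_upwards [h₁] with x hx
    simp only [mul_assoc] at hx
    exact inv_eq_iff_eq_inv.1 (inv_eq_of_intervalIntegral_const_mul_eq_one hx)
  have hAinv : ContinuousOn (fun x => (A x)⁻¹) (Icc a b) := hA.inv₀ fun x hx => (hA₀ x hx).ne'
  have hAinvi : IntervalIntegrable (fun x => (A x)⁻¹) volume a b :=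
    (uIcc_of_le hab.le ▸ hAinv).intervalIntegrable
  have hK' : ContinuousOn (uncurry fun y x => K x y) (Icc a b ×ˢ Icc a b) :=
    hK.comp continuous_swap.continuousOn fun z hz => ⟨hz.2, hz.1⟩
  set B : ℝ → ℝ := fun y => ∫ x in a..b, K x y * (A x)⁻¹
  have hB : ContinuousOn B (Icc a b) := hK'.intervalIntegral_mul isCompact_Icc hab.le hAinvi
  have hB₀ : ∀ y ∈ Icc a b, 0 < B y := fun y hy =>
    intervalIntegral_mul_pos hab (hK.uncurry_right y hy) hAinvi (fun x hx => hK₀ x hx y hy)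
      fun x hx => inv_pos.2 (hA₀ x hx)
  have hβB : β =ᵐ[volume.restrict (Icc a b)] fun y => (B y)⁻¹ := by
    have hα' : α =ᵐ[volume.restrict (Ι a b)] fun x => (A x)⁻¹ :=
      ae_restrict_of_ae_restrict_of_subset (by rw [uIoc_of_le hab.le]; exact Ioc_subset_Icc_self) hα
    filter_upwards [h₂] with y hy
    have hy' : ∫ x in a..b, β y * (K x y * (A x)⁻¹) = 1 := by
      rw [← hy]
      refine intervalIntegral.integral_congr_ae_restrict ?_
      filter_upwards [hα'] with x hx
      rw [hx]
      ring
    exact inv_eq_iff_eq_inv.1 (inv_eq_of_intervalIntegral_const_mul_eq_one hy')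
  exact ⟨_, _, hAinv, hB.inv₀ fun y hy => (hB₀ y hy).ne', hα, hβB⟩

theorem stmt17_general (θ : ℝ) (f : ℝ × ℝ → ℝ) (a b : ℝ → ℝ) (g : ℝ → ℝ → ℝ)
    (hf : ContinuousOn f (Set.Icc 0 1 ×ˢ Set.Icc 0 1))
    (hg : ∀ x y, g x y = Real.exp (θ * f (x, y) + a x + b y))
    (hb : IntegrableOn (fun y => Real.exp (b y)) (Set.Icc (0:ℝ) 1))
    (hmarg1 : ∀ᵐ x ∂(volume.restrict (Set.Icc (0:ℝ) 1)), ∫ y in (0:ℝ)..1, g x y = 1)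
    (hmarg2 : ∀ᵐ y ∂(volume.restrict (Set.Icc (0:ℝ) 1)), ∫ x in (0:ℝ)..1, g x y = 1) :
    (∀ᵐ x ∂(volume.restrict (Set.Icc (0:ℝ) 1)),
      Real.exp (-a x) = ∫ y in (0:ℝ)..1, Real.exp (θ * f (x, y) + b y)) ∧
    (∀ x₁ ∈ Set.Icc (0:ℝ) 1, ∀ x₂ ∈ Set.Icc (0:ℝ) 1,
      |(∫ y in (0:ℝ)..1, Real.exp (θ * f (x₁, y) + b y)) -
          ∫ y in (0:ℝ)..1, Real.exp (θ * f (x₂, y) + b y)|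
        ≤ (⨆ y : Set.Icc (0:ℝ) 1,
              |Real.exp (θ * f (x₁, (y : ℝ))) - Real.exp (θ * f (x₂, (y : ℝ)))|) *
            ∫ y in (0:ℝ)..1, Real.exp (b y)) ∧
    (∃ gc : ℝ → ℝ → ℝ,
      ContinuousOn (fun z : ℝ × ℝ => gc z.1 z.2) (Set.Icc 0 1 ×ˢ Set.Icc 0 1) ∧
      ∀ᵐ z ∂(volume.restrict (Set.Icc (0:ℝ) 1 ×ˢ Set.Icc (0:ℝ) 1)),
        gc (z : ℝ × ℝ).1 z.2 = g z.1 z.2) := by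
  have hK : ContinuousOn (uncurry fun x y => Real.exp (θ * f (x, y))) (Icc 0 1 ×ˢ Icc 0 1) :=
    Real.continuous_exp.comp_continuousOn (continuousOn_const.mul hf)
  have hg' : ∀ x y, g x y = Real.exp (a x) * Real.exp (θ * f (x, y)) * Real.exp (b y) :=
    fun x y => by rw [hg, Real.exp_add, Real.exp_add]; ring
  simp only [hg'] at hmarg1 hmarg2
  simp only [Real.exp_add]
  refine ⟨?_, fun x₁ hx₁ x₂ hx₂ => ?_, ?_⟩
  · filter_upwards [hmarg1] with x hx
    simp only [mul_assoc] at hx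
    rw [Real.exp_neg, inv_eq_of_intervalIntegral_const_mul_eq_one hx]
  · exact abs_intervalIntegral_mul_sub_le zero_le_one (hK.uncurry_left x₁ hx₁)
      (hK.uncurry_left x₂ hx₂) ((intervalIntegrable_iff_integrableOn_Icc_of_le zero_le_one).2 hb)
      fun y _ => (Real.exp_pos _).le
  · obtain ⟨α, β, hα, hβ, hαa, hβb⟩ := exists_continuousOn_ae_eq_of_marginals_eq_one zero_lt_one
      hK (fun x _ y _ => Real.exp_pos _) hb (fun y _ => Real.exp_pos _) hmarg1 hmarg2
    refine ⟨fun x y => α x * Real.exp (θ * f (x, y)) * β y, ?_, ?_⟩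
    · exact ((hα.comp continuousOn_fst fun z hz => hz.1).mul hK).mul
        (hβ.comp continuousOn_snd fun z hz => hz.2)
    · rw [Measure.volume_eq_prod]
      filter_upwards [Measure.ae_restrict_prod_of_ae_restrict hαa hβb] with z hz
      rw [hg', hz.1, hz.2]

theorem stmt17 (θ : ℝ) (f : ℝ × ℝ → ℝ) (a b : ℝ → ℝ) (g : ℝ → ℝ → ℝ)
    (hf : ContinuousOn f (Set.Icc 0 1 ×ˢ Set.Icc 0 1))
    (hg : ∀ x y, g x y = Real.exp (θ * f (x, y) + a x + b y))
    (hbmeas : Measurable b)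
    (hb : IntegrableOn (fun y => Real.exp (b y)) (Set.Icc (0:ℝ) 1))
    (hmarg1 : ∀ᵐ x ∂(volume.restrict (Set.Icc (0:ℝ) 1)), ∫ y in (0:ℝ)..1, g x y = 1)
    (hmarg2 : ∀ᵐ y ∂(volume.restrict (Set.Icc (0:ℝ) 1)), ∫ x in (0:ℝ)..1, g x y = 1) :
    (∀ᵐ x ∂(volume.restrict (Set.Icc (0:ℝ) 1)),
      Real.exp (-a x) = ∫ y in (0:ℝ)..1, Real.exp (θ * f (x, y) + b y)) ∧
    (∀ x₁ ∈ Set.Icc (0:ℝ) 1, ∀ x₂ ∈ Set.Icc (0:ℝ) 1,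
      |(∫ y in (0:ℝ)..1, Real.exp (θ * f (x₁, y) + b y)) -
          ∫ y in (0:ℝ)..1, Real.exp (θ * f (x₂, y) + b y)|
        ≤ (⨆ y : Set.Icc (0:ℝ) 1,
              |Real.exp (θ * f (x₁, (y : ℝ))) - Real.exp (θ * f (x₂, (y : ℝ)))|) *
            ∫ y in (0:ℝ)..1, Real.exp (b y)) ∧
    (∃ gc : ℝ → ℝ → ℝ,
      ContinuousOn (fun z : ℝ × ℝ => gc z.1 z.2) (Set.Icc 0 1 ×ˢ Set.Icc 0 1) ∧
      ∀ᵐ z ∂(volume.restrict (Set.Icc (0:ℝ) 1 ×ˢ Set.Icc (0:ℝ) 1)),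
        gc (z : ℝ × ℝ).1 z.2 = g z.1 z.2) :=
  stmt17_general θ f a b g hf hg hb hmarg1 hmarg2
end
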